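/- Let N be a connected, locally path-connected and semilocally simply connected topological space, let q : N' → N be a covering map of finite degree, let A ⊆ N be a subspace, and let c : A × [0,1] → N be a homeomorphism satisfying c(a,0) = a for all a ∈ A. Set A' = q⁻¹(A) ⊆ N'. Then there exists a homeomorphism c' : A' × [0,1] → N' such that q(c'(a',t)) = c(q(a'),t) for all a' ∈ A' and t ∈ [0,1]; that is, the collar c of A in N lifts to a collar of A' in N' compatible with the covering projections. -/

import Mathlib

open unitInterval

/-- A topological space `N` is semilocally simply connected if every point has a neighborhood
`U` such that every loop contained in `U` is null-homotopic in `N`. -/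
def SemilocallySimplyConnected (N : Type*) [TopologicalSpace N] : Prop :=
  ∀ x : N, ∃ U ∈ nhds x, ∀ γ : Path x x, (∀ t : unitInterval, γ t ∈ U) →
    γ.Homotopic (Path.refl x)

/-!
Transporting `q` along `c⁻¹` turns it into a covering `p` of the cylinder `A × I`, and then the
collar is the homotopy lifting property. Lifting `(e, t) ↦ ((p e).1, t)` from the bottom
`B = {e | (p e).2 = 0}` with initial map the inclusion gives `B × I → N'`. Lifting the contraction
`(u, e) ↦ ((p e).1, (1 - u) (p e).2)` from the identity gives at time `1` a retraction `ρ` onto `B`,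
and `e ↦ (ρ e, (p e).2)` is the inverse: both composites are identities by uniqueness of path
lifts, since in each case the two paths compared lift the same path and agree at one end.
-/

namespace IsCoveringMap

variable {E X : Type*} [TopologicalSpace E] [TopologicalSpace X] {p : E → X × I}
  (hp : IsCoveringMap p)

noncomputable def cylinderLift : C(I × {e // (p e).2 = 0}, E) :=
  hp.liftHomotopy ⟨fun te => ((p te.2).1, te.1), by have := hp.continuous; fun_prop⟩
    ⟨Subtype.val, by fun_prop⟩ fun e => by simp [← e.2]

lemma proj_cylinderLift (t : I) (e : {e // (p e).2 = 0}) :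
    p (hp.cylinderLift (t, e)) = ((p e).1, t) :=
  congr_fun (hp.liftHomotopy_lifts ..) (t, e)

lemma cylinderLift_zero (e : {e // (p e).2 = 0}) : hp.cylinderLift (0, e) = e :=
  hp.liftHomotopy_zero ..

noncomputable def contractLift : C(I × E, E) :=
  hp.liftHomotopy
    ⟨fun ue => ((p ue.2).1, σ ue.1 * (p ue.2).2), by have := hp.continuous; fun_prop⟩ (.id E)
    fun e => by simp

lemma proj_contractLift (u : I) (e : E) :
    p (hp.contractLift (u, e)) = ((p e).1, σ u * (p e).2) :=
  congr_fun (hp.liftHomotopy_lifts ..) (u, e)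

lemma contractLift_zero (e : E) : hp.contractLift (0, e) = e :=
  hp.liftHomotopy_zero ..

lemma contractLift_cylinderLift (u t : I) (e : {e // (p e).2 = 0}) :
    hp.contractLift (u, hp.cylinderLift (t, e)) = hp.cylinderLift (σ u * t, e) := by
  refine congr_fun (hp.eq_of_comp_eq (g₁ := fun u => hp.contractLift (u, hp.cylinderLift (t, e)))
    (g₂ := fun u => hp.cylinderLift (σ u * t, e)) (by fun_prop) (by fun_prop) ?_ 0 ?_) u
  · ext u <;> simp [proj_contractLift, proj_cylinderLift]
  · simp [contractLift_zero]

lemma snd_proj_contractLift_one (e : E) : (p (hp.contractLift (1, e))).2 = 0 := by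
  simp [proj_contractLift]

lemma cylinderLift_contractLift (u : I) (e : E) :
    hp.cylinderLift (σ u * (p e).2, ⟨_, hp.snd_proj_contractLift_one e⟩) =
      hp.contractLift (u, e) := by
  refine congr_fun (hp.eq_of_comp_eq
    (g₁ := fun u => hp.cylinderLift (σ u * (p e).2, ⟨_, hp.snd_proj_contractLift_one e⟩))
    (g₂ := fun u => hp.contractLift (u, e)) (by fun_prop) (by fun_prop) ?_ 1 ?_) u
  · ext u <;> simp [proj_contractLift, proj_cylinderLift]
  · simp [cylinderLift_zero]

noncomputable def cylinderEquiv : {e // (p e).2 = 0} × I ≃ₜ E where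
  toFun x := hp.cylinderLift (x.2, x.1)
  invFun e := (⟨_, hp.snd_proj_contractLift_one e⟩, (p e).2)
  left_inv := fun ⟨e, t⟩ => by
    ext
    · simpa [contractLift_cylinderLift] using hp.cylinderLift_zero e
    · simp [proj_cylinderLift]
  right_inv e := by simpa [contractLift_zero] using hp.cylinderLift_contractLift 0 e
  continuous_toFun := by fun_prop
  continuous_invFun := by have := hp.continuous; fun_prop

lemma proj_cylinderEquiv (e : {e // (p e).2 = 0}) (t : I) :
    p (hp.cylinderEquiv (e, t)) = ((p e).1, t) :=
  hp.proj_cylinderLift t e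

end IsCoveringMap

namespace Homeomorph

variable {N : Type*} [TopologicalSpace N] {A : Set N} {c : A × I ≃ₜ N}

lemma symm_apply_of_collar (hc : ∀ a : A, c (a, 0) = a) (a : A) : c.symm a = (a, 0) :=
  c.symm_apply_eq.mpr (hc a).symm

lemma setOf_symm_snd_eq_zero_of_collar (hc : ∀ a : A, c (a, 0) = a) :
    {x | (c.symm x).2 = 0} = A := by
  ext x
  refine ⟨fun hx => ?_, fun hx => by simp [c.symm_apply_of_collar hc ⟨x, hx⟩]⟩
  have hx' : c.symm x = ((c.symm x).1, 0) := Prod.ext rfl hx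
  rw [← c.apply_symm_apply x, hx', hc]
  exact Subtype.mem _

end Homeomorph

theorem collar_lifts_along_finite_covering_general
    {N N' : Type*} [TopologicalSpace N] [TopologicalSpace N']
    (q : N' → N) (hq : IsCoveringMap q)
    (A : Set N) (c : ↥A × unitInterval ≃ₜ N)
    (hc : ∀ a : ↥A, c (a, 0) = (a : N)) :
    ∃ c' : ↥(q ⁻¹' A) × unitInterval ≃ₜ N',
      ∀ (a' : ↥(q ⁻¹' A)) (t : unitInterval),
        q (c' (a', t)) = c (⟨⟨q (a' : N'), a'.2⟩, t⟩) := by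
  have hp : IsCoveringMap (c.symm ∘ q) := hq.homeomorph_comp c.symm
  have hbottom : {e | ((c.symm ∘ q) e).2 = 0} = q ⁻¹' A :=
    congr_arg (q ⁻¹' ·) (c.setOf_symm_snd_eq_zero_of_collar hc)
  refine ⟨((Homeomorph.setCongr hbottom).symm.prodCongr (.refl I)).trans hp.cylinderEquiv,
    fun a' t => ?_⟩
  rw [← c.apply_symm_apply (q _)]
  refine congr_arg c ((hp.proj_cylinderEquiv _ t).trans ?_)
  exact congr_arg (·.1, t) (c.symm_apply_of_collar hc ⟨q a', a'.2⟩)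

/-- Let `N` be a connected, locally path-connected and semilocally simply
connected topological space, let `q : N' → N` be a covering map of finite degree, let
`A ⊆ N` be a subspace, and let `c : A × [0,1] → N` be a homeomorphism with `c(a, 0) = a` for
all `a ∈ A`. Set `A' = q⁻¹(A) ⊆ N'`. Then there exists a homeomorphism
`c' : A' × [0,1] → N'` with `q(c'(a', t)) = c(q(a'), t)` for all `a' ∈ A'`, `t ∈ [0,1]`;
that is, the collar `c` of `A` in `N` lifts to a collar of `A'` in `N'` compatible with the
covering projections. -/
theorem collar_lifts_along_finite_covering
    {N N' : Type*} [TopologicalSpace N] [TopologicalSpace N']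
    [ConnectedSpace N] [LocallyPathConnectedSpace N]
    (hslsc : SemilocallySimplyConnected N)
    (q : N' → N) (hq : IsCoveringMap q) (hqsurj : Function.Surjective q)
    (hfin : ∀ x : N, (q ⁻¹' {x}).Finite)
    (A : Set N) (c : ↥A × unitInterval ≃ₜ N)
    (hc : ∀ a : ↥A, c (a, 0) = (a : N)) :
    ∃ c' : ↥(q ⁻¹' A) × unitInterval ≃ₜ N',
      ∀ (a' : ↥(q ⁻¹' A)) (t : unitInterval),
        q (c' (a', t)) = c (⟨⟨q (a' : N'), a'.2⟩, t⟩) :=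
  collar_lifts_along_finite_covering_general q hq A c hc
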